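/- arXiv:1305.6061 — 2 statements merged into one kernel-verified Lean document; each statement's English description precedes it below -/
import Mathlib

section
/- Let w : ℝ → ℝ² be a normalized-curvature trajectory (i.e., twice continuously differentiable with w''(s) = β² w(s) for all s) with Wronskian W. Then at every s ∈ ℝ with w(s) ≠ 0, the function σ ↦ ‖w(σ)‖ is twice differentiable at s and (d²/ds²)‖w(s)‖ = W² / ‖w(s)‖³ + β² ‖w(s)‖. -/
/-!
Differentiating `‖w‖ = √⟪w, w⟫` twice gives, in any real inner product space,
`‖w‖'' = (‖w‖²‖w'‖² - ⟪w, w'⟫²) / ‖w‖³ + ⟪w, w''⟫ / ‖w‖`.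
In the plane, Lagrange's identity turns the first numerator into `(w × w')²`, and the cross product
`w × w'` is constant because its derivative is `w × w'' = β² (w × w) = 0`; so it equals `W`.
Finally `⟪w, w''⟫ = β² ‖w‖²`.
-/

open RealInnerProductSpace

section InnerProductSpace

variable {F : Type*} [NormedAddCommGroup F] [InnerProductSpace ℝ F]

theorem HasDerivAt.norm {f : ℝ → F} {f' : F} {x : ℝ} (hf : HasDerivAt f f' x) (h0 : f x ≠ 0) :
    HasDerivAt (fun t => ‖f t‖) (⟪f x, f'⟫ / ‖f x‖) x := by
  have hpos : 0 < ‖f x‖ := norm_pos_iff.mpr h0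
  have h := hf.norm_sq.sqrt (by positivity)
  simp only [Real.sqrt_sq (norm_nonneg _)] at h
  convert h using 1
  field_simp

theorem hasDerivAt_deriv_norm {f f' : ℝ → F} {f'' : F} {s : ℝ}
    (hf : ∀ t, HasDerivAt f (f' t) t) (hf' : HasDerivAt f' f'' s) (hs : f s ≠ 0) :
    HasDerivAt (deriv fun t => ‖f t‖)
      ((‖f s‖ ^ 2 * ‖f' s‖ ^ 2 - ⟪f s, f' s⟫ ^ 2) / ‖f s‖ ^ 3 + ⟪f s, f''⟫ / ‖f s‖) s := by
  have hpos : 0 < ‖f s‖ := norm_pos_iff.mpr hs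
  have hderiv : (deriv fun t => ‖f t‖) =ᶠ[nhds s] fun t => ⟪f t, f' t⟫ / ‖f t‖ :=
    ((hf s).continuousAt.eventually_ne hs).mono fun t ht => ((hf t).norm ht).deriv
  refine hderiv.hasDerivAt_iff.mpr ?_
  refine (((hf s).inner ℝ hf').div ((hf s).norm hs) hpos.ne').congr_deriv ?_
  rw [real_inner_self_eq_norm_sq]
  field_simp
  ring

end InnerProductSpace

theorem HasDerivAt.euclideanSpace_apply {ι : Type*} [Fintype ι] {v : ℝ → EuclideanSpace ℝ ι}
    {v' : EuclideanSpace ℝ ι} {t : ℝ} (i : ι) (hv : HasDerivAt v v' t) :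
    HasDerivAt (fun t => v t i) (v' i) t :=
  (EuclideanSpace.proj (𝕜 := ℝ) i).hasFDerivAt.comp_hasDerivAt t hv

def planarCross (x y : EuclideanSpace ℝ (Fin 2)) : ℝ := x 0 * y 1 - x 1 * y 0

theorem inner_sq_add_planarCross_sq (x y : EuclideanSpace ℝ (Fin 2)) :
    ⟪x, y⟫ ^ 2 + planarCross x y ^ 2 = ‖x‖ ^ 2 * ‖y‖ ^ 2 := by
  simp only [planarCross, EuclideanSpace.norm_sq_eq, PiLp.inner_apply, Fin.sum_univ_two,
    Real.norm_eq_abs, sq_abs, RCLike.inner_apply, conj_trivial]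
  ring

theorem planarCross_eq_of_hasDerivAt {w w' : ℝ → EuclideanSpace ℝ (Fin 2)} {c : ℝ}
    (hw : ∀ t, HasDerivAt w (w' t) t) (hw' : ∀ t, HasDerivAt w' (c • w t) t) (s t : ℝ) :
    planarCross (w s) (w' s) = planarCross (w t) (w' t) := by
  have hzero : ∀ t, HasDerivAt (fun t => planarCross (w t) (w' t)) 0 t := by
    intro t
    refine ((((hw t).euclideanSpace_apply 0).mul ((hw' t).euclideanSpace_apply 1)).sub
      (((hw t).euclideanSpace_apply 1).mul ((hw' t).euclideanSpace_apply 0))).congr_deriv ?_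
    simp only [PiLp.smul_apply, smul_eq_mul]
    ring
  exact is_const_of_deriv_eq_zero (fun t => (hzero t).differentiableAt)
    (fun t => (hzero t).deriv) s t

theorem stmt_9_general (β : ℝ)
    (w : ℝ → EuclideanSpace ℝ (Fin 2)) (hw : ContDiff ℝ 2 w)
    (hODE : ∀ s : ℝ, deriv (deriv w) s = β ^ 2 • w s)
    (W : ℝ) (hW : W = (w 0) 0 * (deriv w 0) 1 - (w 0) 1 * (deriv w 0) 0) :
    ∀ s : ℝ, w s ≠ 0 →
      DifferentiableAt ℝ (fun σ => ‖w σ‖) s ∧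
      HasDerivAt (deriv fun σ => ‖w σ‖) (W ^ 2 / ‖w s‖ ^ 3 + β ^ 2 * ‖w s‖) s := by
  intro s hs
  have hw₁ : ∀ t, HasDerivAt w (deriv w t) t := fun t =>
    (hw.differentiable (by norm_num) t).hasDerivAt
  have hw₂ : ∀ t, HasDerivAt (deriv w) (β ^ 2 • w t) t := fun t =>
    hODE t ▸ (hw.differentiable_deriv_two t).hasDerivAt
  have hWs : W = planarCross (w s) (deriv w s) :=
    hW.trans (planarCross_eq_of_hasDerivAt hw₁ hw₂ 0 s)
  refine ⟨((hw₁ s).norm hs).differentiableAt, ?_⟩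
  convert hasDerivAt_deriv_norm hw₁ (hw₂ s) hs using 1
  have hpos : 0 < ‖w s‖ := norm_pos_iff.mpr hs
  rw [hWs, real_inner_smul_right, real_inner_self_eq_norm_sq, ← inner_sq_add_planarCross_sq]
  field_simp
  ring

/-- Along a normalized-curvature trajectory `w` (a C² curve in ℝ² with
`w'' = β² w`) with Wronskian `W`, at every point where `w(s) ≠ 0` the function
`σ ↦ ‖w(σ)‖` is twice differentiable at `s` with second derivative
`W²/‖w(s)‖³ + β²‖w(s)‖`. -/
theorem stmt_9 (β : ℝ) (hβ : 0 < β)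
    (w : ℝ → EuclideanSpace ℝ (Fin 2)) (hw : ContDiff ℝ 2 w)
    (hODE : ∀ s : ℝ, deriv (deriv w) s = β ^ 2 • w s)
    (W : ℝ) (hW : W = (w 0) 0 * (deriv w 0) 1 - (w 0) 1 * (deriv w 0) 0) :
    ∀ s : ℝ, w s ≠ 0 →
      DifferentiableAt ℝ (fun σ => ‖w σ‖) s ∧
      HasDerivAt (deriv fun σ => ‖w σ‖) (W ^ 2 / ‖w s‖ ^ 3 + β ^ 2 * ‖w s‖) s :=
  stmt_9_general β w hw hODE W hW
end

section
/- Let w : ℝ → ℝ² be a normalized-curvature trajectory (i.e., twice continuously differentiable with w''(s) = β² w(s) for all s) with Wronskian W ≠ 0 and 𝔠 > 0. Let S > 0 be such that for all σ ∈ [0,S]: ‖w(σ)‖ ≤ 1 and 𝔠²β² ‖w(σ)‖² > W². Define φ(s) := ∫₀ˢ (W/(𝔠β)) √(𝔠²β² − ‖w'(σ)‖²) / (‖w(σ)‖² − W²/(𝔠²β²)) dσ for s ∈ [0,S]. Then |φ(s)| < π for all s ∈ [0,S]. -/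
/-!
Put `n = ‖w‖²`, `p = ⟪w, w'⟫`, `m = (1 - 𝔠²) / 2`, `e = √(m² + W²/β²)` and
`k = W²/(𝔠²β²)`.
Energy conservation and the Lagrange identity `W² + p² = ‖w‖² ‖w'‖²` give
`p² = β² ((n - m)² - e²)`, so on `[0, S]`, where `n > k`, the curve stays on the branch
`n ≥ m + e`. There `u = p / (β √(n - m + e))` satisfies `u' = β √(n - m + e)` and
`u² + C = n - k` with `C = m + e - k > 0`, and the integrand defining `φ` is dominated by
`√C u' / (u² + C)`, the derivative of `arctan (u / √C)`. Hence `|φ s|` is bounded by an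
oscillation of `arctan`, which is less than `π`.
-/

open Real Set
open scoped InnerProductSpace

lemma eq_of_forall_hasDerivAt_zero {f : ℝ → ℝ} (hf : ∀ s, HasDerivAt f 0 s) (s t : ℝ) :
    f s = f t :=
  is_const_of_deriv_eq_zero (fun s => (hf s).differentiableAt) (fun s => (hf s).deriv) s t

lemma EuclideanSpace.hasDerivAt_apply {ι : Type*} [Fintype ι] {f : ℝ → EuclideanSpace ℝ ι}
    {v : EuclideanSpace ℝ ι} {s : ℝ} (hf : HasDerivAt f v s) (i : ι) :
    HasDerivAt (fun t => f t i) (v i) s :=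
  (EuclideanSpace.proj (𝕜 := ℝ) i).hasFDerivAt.comp_hasDerivAt s hf

section Trajectory

variable {E : Type*} [NormedAddCommGroup E] [InnerProductSpace ℝ E] {β : ℝ} {w w' : ℝ → E}

lemma hasDerivAt_inner_of_deriv_eq_smul (hw : ∀ s, HasDerivAt w (w' s) s)
    (hw' : ∀ s, HasDerivAt w' (β ^ 2 • w s) s) (s : ℝ) :
    HasDerivAt (fun t => ⟪w t, w' t⟫_ℝ) (‖w' s‖ ^ 2 + β ^ 2 * ‖w s‖ ^ 2) s := by
  refine ((hw s).inner ℝ (hw' s)).congr_deriv ?_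
  rw [inner_smul_right, real_inner_self_eq_norm_sq, real_inner_self_eq_norm_sq]
  ring

lemma norm_deriv_sq_sub_eq_of_deriv_eq_smul (hw : ∀ s, HasDerivAt w (w' s) s)
    (hw' : ∀ s, HasDerivAt w' (β ^ 2 • w s) s) (s : ℝ) :
    ‖w' s‖ ^ 2 - β ^ 2 * ‖w s‖ ^ 2 = ‖w' 0‖ ^ 2 - β ^ 2 * ‖w 0‖ ^ 2 := by
  refine eq_of_forall_hasDerivAt_zero (f := fun t => ‖w' t‖ ^ 2 - β ^ 2 * ‖w t‖ ^ 2)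
    (fun t => ?_) s 0
  refine (((hw' t).norm_sq).sub (((hw t).norm_sq).const_mul (β ^ 2))).congr_deriv ?_
  rw [inner_smul_right, real_inner_comm]
  ring

end Trajectory

section Plane

def planeCross (x y : EuclideanSpace ℝ (Fin 2)) : ℝ := x 0 * y 1 - x 1 * y 0

lemma planeCross_sq_add_inner_sq (x y : EuclideanSpace ℝ (Fin 2)) :
    planeCross x y ^ 2 + ⟪x, y⟫_ℝ ^ 2 = ‖x‖ ^ 2 * ‖y‖ ^ 2 := by
  simp only [planeCross, EuclideanSpace.norm_sq_eq, PiLp.inner_apply, Fin.sum_univ_two,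
    Real.norm_eq_abs, sq_abs, RCLike.inner_apply, conj_trivial]
  ring

variable {β : ℝ} {w w' : ℝ → EuclideanSpace ℝ (Fin 2)}

lemma planeCross_eq_of_deriv_eq_smul (hw : ∀ s, HasDerivAt w (w' s) s)
    (hw' : ∀ s, HasDerivAt w' (β ^ 2 • w s) s) (s : ℝ) :
    planeCross (w s) (w' s) = planeCross (w 0) (w' 0) := by
  refine eq_of_forall_hasDerivAt_zero (f := fun t => planeCross (w t) (w' t)) (fun t => ?_) s 0
  have h i := EuclideanSpace.hasDerivAt_apply (hw t) i
  have h' i := EuclideanSpace.hasDerivAt_apply (hw' t) i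
  refine (((h 0).mul (h' 1)).sub ((h 1).mul (h' 0))).congr_deriv ?_
  simp only [PiLp.smul_apply, smul_eq_mul]
  ring

end Plane

/-- Along `x = e cosh (2β(t - t₀))` with `p = x' / 2`, this quotient is
`√(2e) sinh (β(t - t₀))`. -/
lemma hasDerivAt_div_mul_sqrt {x p : ℝ → ℝ} {β e s : ℝ} (hβ : β ≠ 0)
    (hx : HasDerivAt x (2 * p s) s) (hp : HasDerivAt p (2 * β ^ 2 * x s) s)
    (hxp : p s ^ 2 = β ^ 2 * (x s ^ 2 - e ^ 2)) (hpos : 0 < x s + e) :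
    HasDerivAt (fun t => p t / (β * √(x t + e))) (β * √(x s + e)) s := by
  have hv : 0 < √(x s + e) := sqrt_pos.2 hpos
  have hv2 : √(x s + e) ^ 2 = x s + e := sq_sqrt hpos.le
  refine (hp.div (((hx.add_const e).sqrt hpos.ne').const_mul β)
    (mul_ne_zero hβ hv.ne')).congr_deriv ?_
  field_simp
  linear_combination (-1 : ℝ) * hxp - β ^ 2 * (√(x s + e) ^ 2 - x s + e) * hv2

lemma hasDerivAt_integral_of_continuousAt {E : Type*} [NormedAddCommGroup E] [NormedSpace ℝ E]
    [CompleteSpace E] {f : ℝ → E} {a b : ℝ} (hmeas : MeasureTheory.AEStronglyMeasurable f)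
    (hf : ∀ x ∈ Icc a b, ContinuousAt f x) (x : ℝ) (hx : x ∈ Icc a b) :
    HasDerivAt (fun t => ∫ y in a..t, f y) (f x) x := by
  refine intervalIntegral.integral_hasDerivAt_right (ContinuousOn.intervalIntegrable ?_)
    hmeas.stronglyMeasurableAtFilter (hf x hx)
  rw [uIcc_of_le hx.1]
  exact fun y hy => (hf y (Icc_subset_Icc le_rfl hx.2 hy)).continuousWithinAt

lemma hasDerivAt_arctan_div_sqrt {u : ℝ → ℝ} {u' C s : ℝ} (hC : 0 < C)
    (hu : HasDerivAt u u' s) :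
    HasDerivAt (fun t => arctan (u t / √C)) (√C * u' / (u s ^ 2 + C)) s := by
  refine (hu.div_const √C).arctan.congr_deriv ?_
  have hsC : 0 < √C := sqrt_pos.2 hC
  field_simp
  linear_combination -u' * sq_sqrt hC.le

lemma abs_sub_lt_pi_of_abs_deriv_le {f f' u u' : ℝ → ℝ} {a b C : ℝ} (hC : 0 < C)
    (hab : a ≤ b) (hf : ∀ x ∈ Icc a b, HasDerivAt f (f' x) x)
    (hu : ∀ x ∈ Icc a b, HasDerivAt u (u' x) x)
    (hbound : ∀ x ∈ Icc a b, |f' x| ≤ √C * u' x / (u x ^ 2 + C)) : |f b - f a| < π := by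
  have hle := image_norm_le_of_norm_deriv_right_le_deriv_boundary' (a := a) (b := b)
    (f := fun x => f x - f a) (B := fun x => arctan (u x / √C) - arctan (u a / √C))
    (fun x hx => ((hf x hx).continuousAt.sub continuousAt_const).continuousWithinAt)
    (fun x hx => ((hf x (Ico_subset_Icc_self hx)).sub_const (f a)).hasDerivWithinAt)
    (by simp)
    (fun x hx => (((hu x hx).div_const √C).arctan.continuousAt.sub
      continuousAt_const).continuousWithinAt)
    (fun x hx => ((hasDerivAt_arctan_div_sqrt hC (hu x (Ico_subset_Icc_self hx))).sub_const
      _).hasDerivWithinAt)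
    (fun x hx => hbound x (Ico_subset_Icc_self hx))
  calc |f b - f a| ≤ arctan (u b / √C) - arctan (u a / √C) := hle ⟨hab, le_rfl⟩
    _ < π / 2 - -(π / 2) := sub_lt_sub (arctan_lt_pi_div_two _) (neg_pi_div_two_lt_arctan _)
    _ = π := by ring

namespace NormalizedCurvature

lemma lt_add_of_lt_one {c m e k : ℝ} (hc : 0 < c) (hm : c ^ 2 = 1 - 2 * m)
    (hke : k * c ^ 2 = e ^ 2 - m ^ 2) (hem : |m| < e) (hk1 : k < 1) : k < m + e := by
  obtain ⟨h1, h2⟩ := abs_lt.1 hem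
  have hc2 : 0 < c ^ 2 := by positivity
  by_contra! h
  nlinarith [mul_le_mul_of_nonneg_left h hc2.le,
    mul_pos (sub_pos.2 h2) (neg_lt_iff_pos_add.1 h1)]

lemma mul_one_sub_le {c m e k n : ℝ} (hc : 0 < c) (hm : c ^ 2 = 1 - 2 * m)
    (hke : k * c ^ 2 = e ^ 2 - m ^ 2) (hem : |m| < e) (hmn : m + e ≤ n) (hn1 : n ≤ 1) :
    k * (1 - n) ≤ (m + e - k) * (n - m + e) := by
  obtain ⟨h1, h2⟩ := abs_lt.1 hem
  have key : (m + e - k) * (n - m + e) * c ^ 2 - k * (1 - n) * c ^ 2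
      = (m + e) * ((1 - m - e) * n + (e - m) * (n - m - e)) := by
    linear_combination (-(1 - m + e)) * hke + ((m + e) * (n - m + e)) * hm
  have : 0 ≤ (m + e) * ((1 - m - e) * n + (e - m) * (n - m - e)) := by
    refine mul_nonneg ?_ (add_nonneg (mul_nonneg ?_ ?_) (mul_nonneg ?_ ?_)) <;> linarith
  exact le_of_mul_le_mul_right (by linarith) (by positivity : 0 < c ^ 2)

lemma abs_integrand_le {β c W k n C v : ℝ} (hβ : 0 < β) (hc : 0 < c)
    (hk : W ^ 2 = k * (c ^ 2 * β ^ 2)) (hkn : k < n) (hn1 : n ≤ 1) (hC : 0 ≤ C)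
    (hv : 0 ≤ v) (h : k * (1 - n) ≤ C * v ^ 2) :
    |W / (c * β) * √(c ^ 2 * β ^ 2 - β ^ 2 * (n - 1 + c ^ 2)) / (n - k)| ≤
      √C * (β * v) / (n - k) := by
  have hnk : 0 < n - k := sub_pos.2 hkn
  refine abs_le_of_sq_le_sq ?_ (by positivity)
  have hWk : (W / (c * β)) ^ 2 = k := by
    rw [div_pow, hk, mul_pow]
    field_simp
  rw [show c ^ 2 * β ^ 2 - β ^ 2 * (n - 1 + c ^ 2) = β ^ 2 * (1 - n) by ring, div_pow, div_pow,
    mul_pow, hWk, sq_sqrt (mul_nonneg (sq_nonneg β) (by linarith)), mul_pow, sq_sqrt hC, mul_pow]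
  refine div_le_div_of_nonneg_right ?_ (sq_nonneg _)
  nlinarith [mul_le_mul_of_nonneg_left h (sq_nonneg β)]

lemma add_le_of_sq_eq {β m e k n p : ℝ} (hβ : β ≠ 0) (hem : |m| < e) (hk : 0 ≤ k)
    (hpe : p ^ 2 = β ^ 2 * ((n - m) ^ 2 - e ^ 2)) (hkn : k < n) : m + e ≤ n := by
  have hsq : 0 ≤ (n - m) ^ 2 - e ^ 2 :=
    nonneg_of_mul_nonneg_right (hpe ▸ sq_nonneg p) (by positivity)
  have hpos : 0 < n - m + e := by linarith [abs_lt.1 hem]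
  nlinarith

lemma abs_integrand_le_sqrt_mul_div {β c W m e k n p : ℝ} (hβ : 0 < β) (hc : 0 < c)
    (hm : c ^ 2 = 1 - 2 * m) (hk : W ^ 2 = k * (c ^ 2 * β ^ 2)) (hke : k * c ^ 2 = e ^ 2 - m ^ 2)
    (hem : |m| < e) (hpe : p ^ 2 = β ^ 2 * ((n - m) ^ 2 - e ^ 2)) (hC : k < m + e)
    (hmn : m + e ≤ n) (hn1 : n ≤ 1) :
    |W / (c * β) * √(c ^ 2 * β ^ 2 - β ^ 2 * (n - 1 + c ^ 2)) / (n - k)| ≤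
      √(m + e - k) * (β * √(n - m + e)) / ((p / (β * √(n - m + e))) ^ 2 + (m + e - k)) := by
  have hpos : 0 < n - m + e := by linarith [abs_lt.1 hem]
  rw [div_pow, mul_pow, sq_sqrt hpos.le, hpe, show β ^ 2 * ((n - m) ^ 2 - e ^ 2) /
    (β ^ 2 * (n - m + e)) + (m + e - k) = n - k by field_simp; ring]
  refine abs_integrand_le hβ hc hk (hC.trans_le hmn) hn1 (sub_pos.2 hC).le (sqrt_nonneg _) ?_
  rw [sq_sqrt hpos.le]
  exact mul_one_sub_le hc hm hke hem hmn hn1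

theorem abs_integral_lt_pi {β c W S s : ℝ} {n p d : ℝ → ℝ} (hβ : 0 < β) (hc : 0 < c)
    (hW : W ≠ 0) (hn : ∀ t, HasDerivAt n (2 * p t) t)
    (hp : ∀ t, HasDerivAt p (d t + β ^ 2 * n t) t)
    (hd : ∀ t, d t = β ^ 2 * (n t - 1 + c ^ 2)) (hnp : ∀ t, W ^ 2 + p t ^ 2 = n t * d t)
    (hn1 : ∀ σ ∈ Icc 0 S, n σ ≤ 1) (hnW : ∀ σ ∈ Icc 0 S, W ^ 2 < c ^ 2 * β ^ 2 * n σ)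
    (hs : s ∈ Icc 0 S) :
    |∫ σ in (0 : ℝ)..s,
        W / (c * β) * √(c ^ 2 * β ^ 2 - d σ) / (n σ - W ^ 2 / (c ^ 2 * β ^ 2))| < π := by
  obtain rfl : d = fun t => β ^ 2 * (n t - 1 + c ^ 2) := funext hd
  set m := (1 - c ^ 2) / 2
  set k := W ^ 2 / (c ^ 2 * β ^ 2) with hk_def
  set e := √(m ^ 2 + (W / β) ^ 2) with he_def
  have hm : c ^ 2 = 1 - 2 * m := by ring
  have hk : W ^ 2 = k * (c ^ 2 * β ^ 2) := by rw [hk_def]; field_simp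
  have hke : k * c ^ 2 = e ^ 2 - m ^ 2 := by
    rw [he_def, sq_sqrt (by positivity), hk_def]; field_simp; ring
  have hem : |m| < e := by
    rw [← sqrt_sq_eq_abs]
    exact sqrt_lt_sqrt (sq_nonneg m) (lt_add_of_pos_right _ (by positivity))
  have hpe (t : ℝ) : p t ^ 2 = β ^ 2 * ((n t - m) ^ 2 - e ^ 2) := by
    have : β ^ 2 * (e ^ 2 - m ^ 2) = W ^ 2 := by rw [← hke, hk]; ring
    linear_combination hnp t + this
  have hkn (σ) (hσ : σ ∈ Icc 0 S) : k < n σ := by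
    rw [hk_def, div_lt_iff₀ (by positivity)]; linarith [hnW σ hσ]
  have hmn (σ) (hσ : σ ∈ Icc 0 S) : m + e ≤ n σ :=
    add_le_of_sq_eq hβ.ne' hem (by positivity) (hpe σ) (hkn σ hσ)
  have hC : k < m + e := lt_add_of_lt_one hc hm hke hem ((hkn s hs).trans_le (hn1 s hs))
  have hncont : Continuous n := continuous_iff_continuousAt.2 fun t => (hn t).continuousAt
  have hnum : Continuous fun t =>
      W / (c * β) * √(c ^ 2 * β ^ 2 - β ^ 2 * (n t - 1 + c ^ 2)) := by
    fun_prop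
  have hden : Continuous fun t => n t - k := by fun_prop
  have hF := hasDerivAt_integral_of_continuousAt
    (hnum.measurable.div hden.measurable).aestronglyMeasurable
    (fun σ hσ => hnum.continuousAt.div hden.continuousAt (sub_pos.2 (hkn σ hσ)).ne')
  have hu (σ) (hσ : σ ∈ Icc 0 S) :
      HasDerivAt (fun t => p t / (β * √(n t - m + e))) (β * √(n σ - m + e)) σ :=
    hasDerivAt_div_mul_sqrt (x := fun t => n t - m) hβ.ne' ((hn σ).sub_const m)
      ((hp σ).congr_deriv (by beta_reduce; linear_combination β ^ 2 * hm)) (hpe σ)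
      (by linarith [hmn σ hσ, abs_lt.1 hem])
  have hsub : Icc 0 s ⊆ Icc 0 S := Icc_subset_Icc le_rfl hs.2
  simpa using abs_sub_lt_pi_of_abs_deriv_le (sub_pos.2 hC) hs.1 (fun σ hσ => hF σ (hsub hσ))
    (fun σ hσ => hu σ (hsub hσ)) fun σ hσ => abs_integrand_le_sqrt_mul_div hβ hc hm hk hke
      hem (hpe σ) hC (hmn σ (hsub hσ)) (hn1 σ (hsub hσ))

end NormalizedCurvature

theorem stmt_15_general (β : ℝ) (hβ : 0 < β)
    (w : ℝ → EuclideanSpace ℝ (Fin 2)) (hw : ContDiff ℝ 2 w)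
    (hODE : ∀ s : ℝ, deriv (deriv w) s = β ^ 2 • w s)
    (W : ℝ) (hWdef : W = (w 0) 0 * (deriv w 0) 1 - (w 0) 1 * (deriv w 0) 0)
    (hW : W ≠ 0)
    (c : ℝ) (hc0 : 0 < c)
    (hc : c ^ 2 = 1 - ‖w 0‖ ^ 2 + β⁻¹ ^ 2 * ‖deriv w 0‖ ^ 2)
    (S : ℝ)
    (hw1 : ∀ σ ∈ Set.Icc 0 S, ‖w σ‖ ≤ 1)
    (hwq : ∀ σ ∈ Set.Icc 0 S, W ^ 2 < c ^ 2 * β ^ 2 * ‖w σ‖ ^ 2)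
    (φ : ℝ → ℝ)
    (hφ : ∀ t : ℝ, φ t = ∫ σ in (0:ℝ)..t,
      (W / (c * β)) * Real.sqrt (c ^ 2 * β ^ 2 - ‖deriv w σ‖ ^ 2) /
        (‖w σ‖ ^ 2 - W ^ 2 / (c ^ 2 * β ^ 2))) :
    ∀ s ∈ Set.Icc 0 S, |φ s| < Real.pi := by
  have hw_deriv (s : ℝ) : HasDerivAt w (deriv w s) s :=
    (hw.differentiable two_ne_zero s).hasDerivAt
  have hw_deriv2 (s : ℝ) : HasDerivAt (deriv w) (β ^ 2 • w s) s :=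
    hODE s ▸ (hw.differentiable_deriv_two s).hasDerivAt
  intro s hs
  rw [hφ]
  refine NormalizedCurvature.abs_integral_lt_pi (n := fun t => ‖w t‖ ^ 2)
    (p := fun t => ⟪w t, deriv w t⟫_ℝ) (d := fun t => ‖deriv w t‖ ^ 2) hβ hc0 hW
    (fun t => (hw_deriv t).norm_sq) (hasDerivAt_inner_of_deriv_eq_smul hw_deriv hw_deriv2)
    (fun t => ?_) (fun t => ?_)
    (fun σ hσ => pow_le_one₀ (norm_nonneg _) (hw1 σ hσ)) hwq hs
  · have := norm_deriv_sq_sub_eq_of_deriv_eq_smul hw_deriv hw_deriv2 t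
    rw [hc]
    field_simp
    linear_combination this
  · have hW' : W = planeCross (w 0) (deriv w 0) := hWdef
    rw [hW', ← planeCross_eq_of_deriv_eq_smul hw_deriv hw_deriv2 t]
    exact planeCross_sq_add_inner_sq _ _

/-- Along a normalized-curvature trajectory `w` (a C² curve in ℝ² with
`w'' = β² w`) with nonzero Wronskian `W` and `𝔠 > 0`, if `‖w‖ ≤ 1` and
`𝔠²β²‖w‖² > W²` on `[0,S]`, then the angle
`φ(s) = ∫₀ˢ (W/(𝔠β))√(𝔠²β² − ‖w'‖²)/(‖w‖² − W²/(𝔠²β²)) dσ` satisfies `|φ(s)| < π`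
for all `s ∈ [0,S]`. -/
theorem stmt_15 (β : ℝ) (hβ : 0 < β)
    (w : ℝ → EuclideanSpace ℝ (Fin 2)) (hw : ContDiff ℝ 2 w)
    (hODE : ∀ s : ℝ, deriv (deriv w) s = β ^ 2 • w s)
    (W : ℝ) (hWdef : W = (w 0) 0 * (deriv w 0) 1 - (w 0) 1 * (deriv w 0) 0)
    (hW : W ≠ 0)
    (c : ℝ) (hc0 : 0 < c)
    (hc : c ^ 2 = 1 - ‖w 0‖ ^ 2 + β⁻¹ ^ 2 * ‖deriv w 0‖ ^ 2)
    (S : ℝ) (hS : 0 < S)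
    (hw1 : ∀ σ ∈ Set.Icc 0 S, ‖w σ‖ ≤ 1)
    (hwq : ∀ σ ∈ Set.Icc 0 S, W ^ 2 < c ^ 2 * β ^ 2 * ‖w σ‖ ^ 2)
    (φ : ℝ → ℝ)
    (hφ : ∀ t : ℝ, φ t = ∫ σ in (0:ℝ)..t,
      (W / (c * β)) * Real.sqrt (c ^ 2 * β ^ 2 - ‖deriv w σ‖ ^ 2) /
        (‖w σ‖ ^ 2 - W ^ 2 / (c ^ 2 * β ^ 2))) :
    ∀ s ∈ Set.Icc 0 S, |φ s| < Real.pi :=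
  stmt_15_general β hβ w hw hODE W hWdef hW c hc0 hc S hw1 hwq φ hφ
end
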